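/- arXiv:2303.08944 — 2 statements merged into one kernel-verified Lean document; each statement's English description precedes it below -/
import Mathlib

section
/- Let H be a hypothesis class of binary classifiers on X with VC dimension d, and let U : X → Finset X satisfy |U(x)| ≤ k for all x. Define the robust loss class L = {(x,y) ↦ max_{z ∈ U(x)} 1[h(z) ≠ y] : h ∈ H}, viewed as a class of binary functions on X × Y. Then the VC dimension of L is at most O(d · log k) (more precisely, if L shatters a set of size m then m ≤ c · d · log(m k) for an absolute constant c, which implies vc(L) ≤ C d log k for constants). -/
open scoped Classical

/-- A class `F` of binary functions on `Z` shatters a finite set `s`. -/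
def Shatters {Z : Type*} (F : Set (Z → Bool)) (s : Finset Z) : Prop :=
  ∀ b : Z → Bool, ∃ f ∈ F, ∀ z ∈ s, f z = b z

/-!
If the robust loss class shatters `m` points `s`, its `2 ^ m` patterns on `s` are all induced by
patterns of `H` on the inflated set `T = ⋃_{(x, y) ∈ s} U x` of at most `m k` points, since the
robust loss of `h` at `(x, y)` only depends on `h` restricted to `U x`. By Sauer–Shelah, `H` has
at most `(m k + 1) ^ d ≤ (m k) ^ (2 d)` patterns on `T`, hence `m log 2 ≤ 2 d log (m k)`.
-/

open Finset

theorem Nat.sum_range_choose_le_succ_pow (n d : ℕ) :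
    ∑ i ∈ range (d + 1), n.choose i ≤ (n + 1) ^ d := by
  rw [add_pow]
  refine sum_le_sum fun i hi => ?_
  rw [one_pow, mul_one]
  exact (Nat.choose_le_pow n i).trans
    (Nat.le_mul_of_pos_right _ (Nat.choose_pos (Nat.lt_succ_iff.mp (mem_range.mp hi))))

/-- A form of the Sauer–Shelah lemma. -/
theorem Finset.card_le_succ_pow_of_shatters {α : Type*} {𝒜 : Finset (Finset α)} {T : Finset α}
    {d : ℕ} (h𝒜 : ∀ B ∈ 𝒜, B ⊆ T) (hd : ∀ B, 𝒜.Shatters B → #B ≤ d) :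
    #𝒜 ≤ (#T + 1) ^ d := by
  have hsub : 𝒜.shatterer ⊆ (range (d + 1)).biUnion fun i => powersetCard i T := by
    intro B hB
    have hB := mem_shatterer.mp hB
    obtain ⟨C, hC, hBC⟩ := hB.exists_superset
    exact mem_biUnion.mpr ⟨#B, mem_range.mpr (Nat.lt_succ_of_le (hd B hB)),
      mem_powersetCard.mpr ⟨hBC.trans (h𝒜 C hC), rfl⟩⟩
  calc #𝒜 ≤ #𝒜.shatterer := card_le_card_shatterer 𝒜
    _ ≤ ∑ i ∈ range (d + 1), #(powersetCard i T) := (card_le_card hsub).trans card_biUnion_le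
    _ = ∑ i ∈ range (d + 1), (#T).choose i := by simp only [card_powersetCard]
    _ ≤ (#T + 1) ^ d := Nat.sum_range_choose_le_succ_pow _ _

section Trace

variable {Z : Type*} {F : Set (Z → Bool)} {s B : Finset Z}

/-- The patterns cut out by `F` on `s`, each recorded as the set of points labelled `true`. -/
noncomputable def trace (F : Set (Z → Bool)) (s : Finset Z) : Finset (Finset Z) :=
  s.powerset.filter fun B => ∃ f ∈ F, s.filter (f · = true) = B

theorem mem_trace : B ∈ trace F s ↔ ∃ f ∈ F, s.filter (f · = true) = B := by
  rw [trace, mem_filter, mem_powerset, and_iff_right_iff_imp]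
  rintro ⟨f, -, rfl⟩
  exact filter_subset _ _

theorem subset_of_mem_trace (hB : B ∈ trace F s) : B ⊆ s :=
  mem_powerset.mp (mem_filter.mp hB).1

theorem Shatters.card_trace (hF : Shatters F s) : #(trace F s) = 2 ^ #s := by
  rw [← card_powerset]
  congr 1
  refine subset_antisymm (filter_subset _ _) fun t ht => mem_trace.mpr ?_
  obtain ⟨f, hf, hft⟩ := hF (· ∈ t)
  refine ⟨f, hf, ext fun z => ?_⟩
  by_cases hz : z ∈ s
  · simp [hz, hft z hz]
  · simpa [hz] using fun h => hz (mem_powerset.mp ht h)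

theorem shatters_of_shatters_trace (hB : (trace F s).Shatters B) : Shatters F B := by
  intro b
  obtain ⟨C, hC, hBC⟩ := hB.exists_superset
  have hBs : B ⊆ s := hBC.trans (subset_of_mem_trace hC)
  obtain ⟨u, hu, hBu⟩ := hB (filter_subset (b · = true) B)
  obtain ⟨f, hf, rfl⟩ := mem_trace.mp hu
  refine ⟨f, hf, fun z hz => ?_⟩
  have hz' := congrArg (z ∈ ·) hBu
  simp only [mem_inter, mem_filter, hz, hBs hz, true_and, eq_iff_iff] at hz'
  exact Bool.eq_iff_iff.mpr hz'

theorem card_trace_le_succ_pow {d : ℕ} (hd : ∀ B, Shatters F B → #B ≤ d) (s : Finset Z) :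
    #(trace F s) ≤ (#s + 1) ^ d :=
  card_le_succ_pow_of_shatters (fun _ => subset_of_mem_trace)
    fun B hB => hd B (shatters_of_shatters_trace hB)

end Trace

section RobustLoss

variable {X : Type*} (H : Set (X → Bool)) (U : X → Finset X)

def robustLoss : Set (X × Bool → Bool) :=
  {f | ∃ h ∈ H, ∀ p : X × Bool, f p = decide (∃ z ∈ U p.1, h z ≠ p.2)}

theorem trace_robustLoss_subset_image (s : Finset (X × Bool)) :
    trace (robustLoss H U) s ⊆ (trace H (s.biUnion fun p => U p.1)).image
      fun B => s.filter fun p => ∃ z ∈ U p.1, decide (z ∈ B) ≠ p.2 := by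
  intro t ht
  obtain ⟨f, ⟨h, hH, hf⟩, rfl⟩ := mem_trace.mp ht
  refine mem_image.mpr ⟨_, mem_trace.mpr ⟨h, hH, rfl⟩, filter_congr fun p hp => ?_⟩
  rw [hf, decide_eq_true_iff]
  refine exists_congr fun z => and_congr_right fun hz => ?_
  simp only [mem_filter, subset_biUnion_of_mem (fun q => U q.1) hp hz, true_and,
    Bool.decide_eq_true]

theorem card_trace_robustLoss_le (s : Finset (X × Bool)) :
    #(trace (robustLoss H U) s) ≤ #(trace H (s.biUnion fun p => U p.1)) :=
  (card_le_card (trace_robustLoss_subset_image H U s)).trans card_image_le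

end RobustLoss

theorem le_three_mul_log_of_two_pow_le {m d n : ℕ} (hn : 2 ≤ n) (h : 2 ^ m ≤ (n + 1) ^ d) :
    (m : ℝ) ≤ 3 * d * Real.log n := by
  have hpow : 2 ^ m ≤ n ^ (2 * d) := by
    rw [pow_mul]
    exact h.trans (Nat.pow_le_pow_left (by nlinarith) d)
  have hlog : (m : ℝ) * Real.log 2 ≤ (2 * d : ℕ) * Real.log n := by
    rw [← Real.log_pow, ← Real.log_pow]
    exact Real.log_le_log (by positivity) (by exact_mod_cast hpow)
  have hlogn : 0 ≤ Real.log n := Real.log_nonneg (by exact_mod_cast (by omega : 1 ≤ n))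
  push_cast at hlog
  -- `3` works because `log 2 > 2 / 3`.
  nlinarith [Real.log_two_gt_d9, mul_nonneg (Nat.cast_nonneg d) hlogn,
    mul_le_mul_of_nonneg_left Real.log_two_gt_d9.le (Nat.cast_nonneg m)]

/-- VC dimension of the robust loss class. If `H` has VC dimension at most `d`
and `|U(x)| ≤ k`, then any set shattered by the robust loss class
`L = {(x,y) ↦ max_{z∈U(x)} 1[h(z)≠y] : h ∈ H}` of size `m` satisfies
`m ≤ c · d · log(m k)` for an absolute constant `c`, so `vc(L) = O(d log k)`. -/
theorem stmt2 : ∃ c : ℝ, 0 < c ∧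
    ∀ {X : Type} (H : Set (X → Bool)) (d k : ℕ), 2 ≤ k →
      (∀ s : Finset X, Shatters H s → s.card ≤ d) →
      ∀ (U : X → Finset X), (∀ x, (U x).card ≤ k) →
        ∀ s : Finset (X × Bool),
          Shatters {f : X × Bool → Bool |
              ∃ h ∈ H, ∀ p : X × Bool, f p = decide (∃ z ∈ U p.1, h z ≠ p.2)} s →
          (s.card : ℝ) ≤ c * d * Real.log (s.card * k) := by
  refine ⟨3, by norm_num, fun H d k hk hH U hU s hs => ?_⟩
  rcases Nat.eq_zero_or_pos #s with hs0 | hs0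
  · simp [hs0]
  have hT : #(s.biUnion fun p => U p.1) ≤ #s * k :=
    card_biUnion_le_card_mul _ _ _ fun p _ => hU p.1
  have hpatterns : 2 ^ #s ≤ (#s * k + 1) ^ d :=
    calc 2 ^ #s = #(trace (robustLoss H U) s) := (Shatters.card_trace hs).symm
      _ ≤ #(trace H (s.biUnion fun p => U p.1)) := card_trace_robustLoss_le H U s
      _ ≤ (#(s.biUnion fun p => U p.1) + 1) ^ d := card_trace_le_succ_pow hH _
      _ ≤ (#s * k + 1) ^ d := Nat.pow_le_pow_left (by omega) d
  exact_mod_cast le_three_mul_log_of_two_pow_le (by nlinarith) hpatterns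
end

section
/- Multiplicative Weights regret bound: for any sequence of cost vectors m_1,...,m_T ∈ [0,1]^n and parameter 0 < δ ≤ 1/2, the Multiplicative Weights algorithm with update w_{t+1}(i) = w_t(i)(1 − δ m_t(i)) and plays p_t(i) = w_t(i)/Σ_j w_t(j) (starting from uniform weights) satisfies Σ_{t=1}^T ⟨m_t, p_t⟩ ≤ (1+δ) min_{i ∈ [n]} Σ_{t=1}^T m_t(i) + (ln n)/δ. -/
/-!
The potential `Φ_k = Σ_i w_k(i)` shrinks by exactly the factor `1 - δ ⟨m_k, p_k⟩` in round `k`, so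
`log Φ_T = log n + Σ_k log (1 - δ ⟨m_k, p_k⟩) ≤ log n - δ Σ_k ⟨m_k, p_k⟩`. On the other hand `Φ_T`
is at least the weight `∏_k (1 - δ m_k(i))` of any single expert `i`, and
`log (1 - z) ≥ -z - z²` on `[0, 1/2]` gives `log Φ_T ≥ -(δ + δ²) Σ_k m_k(i)`.
-/

open Finset Real

lemma neg_sub_sq_le_log_one_sub {z : ℝ} (hz0 : 0 ≤ z) (hz : z ≤ 1 / 2) :
    -z - z ^ 2 ≤ log (1 - z) := by
  rw [le_log_iff_exp_le (by linarith), show -z - z ^ 2 = -(z + z ^ 2) by ring, exp_neg,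
    inv_le_iff_one_le_mul₀ (exp_pos _)]
  have := quadratic_le_exp_of_nonneg (by positivity : 0 ≤ z + z ^ 2)
  nlinarith [mul_le_mul_of_nonneg_left this (by linarith : (0 : ℝ) ≤ 1 - z)]

lemma neg_mul_le_log_one_sub_mul {δ x : ℝ} (hδ0 : 0 ≤ δ) (hδ : δ ≤ 1 / 2) (hx : x ∈ Set.Icc 0 1) :
    -(δ + δ ^ 2) * x ≤ log (1 - δ * x) := by
  obtain ⟨hx0, hx1⟩ := hx
  calc -(δ + δ ^ 2) * x ≤ -(δ * x) - (δ * x) ^ 2 := by nlinarith [mul_nonneg hx0 (sq_nonneg δ)]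
    _ ≤ log (1 - δ * x) := neg_sub_sq_le_log_one_sub (mul_nonneg hδ0 hx0) (by nlinarith)

lemma Fin.prod_filter_lt_eq_prod_range {M : Type*} [CommMonoid M] {T : ℕ} (t : Fin T)
    (f : ℕ → M) : ∏ s ∈ univ.filter (· < t), f s = ∏ s ∈ range t, f s := by
  have hrange : (univ.filter (· < t)).map Fin.valEmbedding = range t := by
    ext s
    simp only [mem_map, mem_filter, mem_univ, true_and, Fin.valEmbedding_apply, mem_range]
    exact ⟨fun ⟨u, hu, hus⟩ => hus ▸ hu, fun hs => ⟨⟨s, hs.trans t.isLt⟩, hs, rfl⟩⟩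
  rw [← hrange, prod_map]
  rfl

namespace MultiplicativeWeights

noncomputable section

variable {ι : Type*} (δ : ℝ) (c : ℕ → ι → ℝ)

def weight (k : ℕ) (i : ι) : ℝ := ∏ s ∈ range k, (1 - δ * c s i)

lemma weight_succ (k : ℕ) (i : ι) : weight δ c (k + 1) i = weight δ c k i * (1 - δ * c k i) :=
  prod_range_succ _ _

variable {δ c} in
lemma weight_pos (hc : ∀ s i, δ * c s i < 1) (k : ℕ) (i : ι) : 0 < weight δ c k i :=
  prod_pos fun s _ => sub_pos.2 (hc s i)

variable [Fintype ι]

def potential (k : ℕ) : ℝ := ∑ i, weight δ c k i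

def play (k : ℕ) (i : ι) : ℝ := weight δ c k i / potential δ c k

def expectedCost (k : ℕ) : ℝ := ∑ i, play δ c k i * c k i

variable {δ c}

lemma weight_le_potential (hc : ∀ s i, δ * c s i < 1) (k : ℕ) (i : ι) :
    weight δ c k i ≤ potential δ c k :=
  single_le_sum (fun j _ => (weight_pos hc k j).le) (mem_univ i)

lemma potential_pos [Nonempty ι] (hc : ∀ s i, δ * c s i < 1) (k : ℕ) : 0 < potential δ c k :=
  sum_pos (fun i _ => weight_pos hc k i) univ_nonempty

lemma potential_succ [Nonempty ι] (hc : ∀ s i, δ * c s i < 1) (k : ℕ) :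
    potential δ c (k + 1) = potential δ c k * (1 - δ * expectedCost δ c k) := by
  have hΦ : ∑ i, weight δ c k i ≠ 0 := (potential_pos hc k).ne'
  simp only [potential, expectedCost, play, weight_succ, mul_sub, mul_one, sum_sub_distrib,
    mul_sum]
  congr 1
  refine sum_congr rfl fun i _ => ?_
  field_simp

lemma one_sub_mul_expectedCost_pos [Nonempty ι] (hc : ∀ s i, δ * c s i < 1) (k : ℕ) :
    0 < 1 - δ * expectedCost δ c k := by
  have h := potential_pos hc (k + 1)
  rw [potential_succ hc] at h
  exact pos_of_mul_pos_right h (potential_pos hc k).le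

lemma potential_eq [Nonempty ι] (hc : ∀ s i, δ * c s i < 1) (k : ℕ) :
    potential δ c k = Fintype.card ι * ∏ s ∈ range k, (1 - δ * expectedCost δ c s) := by
  induction k with
  | zero => simp [potential, weight]
  | succ k ih => rw [potential_succ hc, ih, prod_range_succ, mul_assoc]

theorem sum_expectedCost_le (hδ0 : 0 < δ) (hδ : δ ≤ 1 / 2) (hc : ∀ s i, c s i ∈ Set.Icc 0 1)
    (k : ℕ) (i₀ : ι) :
    ∑ s ∈ range k, expectedCost δ c s ≤ (1 + δ) * ∑ s ∈ range k, c s i₀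
      + log (Fintype.card ι) / δ := by
  have : Nonempty ι := ⟨i₀⟩
  have hδc : ∀ s i, δ * c s i < 1 := fun s i => by nlinarith [(hc s i).1, (hc s i).2]
  have hlower : -(δ + δ ^ 2) * ∑ s ∈ range k, c s i₀ ≤ log (potential δ c k) :=
    calc -(δ + δ ^ 2) * ∑ s ∈ range k, c s i₀
        ≤ ∑ s ∈ range k, log (1 - δ * c s i₀) := by
          rw [mul_sum]
          exact sum_le_sum fun s _ => neg_mul_le_log_one_sub_mul hδ0.le hδ (hc s i₀)
      _ = log (weight δ c k i₀) := (log_prod fun s _ => (sub_pos.2 (hδc s i₀)).ne').symm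
      _ ≤ log (potential δ c k) := log_le_log (weight_pos hδc k i₀) (weight_le_potential hδc k i₀)
  have hupper :
      log (potential δ c k) ≤ log (Fintype.card ι) - δ * ∑ s ∈ range k, expectedCost δ c s :=
    calc log (potential δ c k)
        = log (Fintype.card ι) + ∑ s ∈ range k, log (1 - δ * expectedCost δ c s) := by
          rw [potential_eq hδc, log_mul (by positivity)
            (prod_pos fun s _ => one_sub_mul_expectedCost_pos hδc s).ne',
            log_prod fun s _ => (one_sub_mul_expectedCost_pos hδc s).ne']
      _ ≤ log (Fintype.card ι) + ∑ s ∈ range k, -(δ * expectedCost δ c s) := by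
          gcongr with s
          linarith [log_le_sub_one_of_pos (one_sub_mul_expectedCost_pos hδc s)]
      _ = log (Fintype.card ι) - δ * ∑ s ∈ range k, expectedCost δ c s := by
          rw [sum_neg_distrib, mul_sum, sub_eq_add_neg]
  have hscaled : δ * ∑ s ∈ range k, expectedCost δ c s
      ≤ δ * ((1 + δ) * ∑ s ∈ range k, c s i₀ + log (Fintype.card ι) / δ) := by
    rw [mul_add, mul_div_cancel₀ _ hδ0.ne']
    linarith
  exact le_of_mul_le_mul_left hscaled hδ0

end

end MultiplicativeWeights

open MultiplicativeWeights in
theorem stmt5_general (n T : ℕ) (δ : ℝ) (hδ0 : 0 < δ) (hδ : δ ≤ 1 / 2)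
    (cost : Fin T → Fin n → ℝ) (hcost : ∀ t i, cost t i ∈ Set.Icc (0:ℝ) 1)
    (w : Fin T → Fin n → ℝ)
    (hw : ∀ t i, w t i = ∏ s ∈ Finset.univ.filter (fun s => s < t), (1 - δ * cost s i))
    (p : Fin T → Fin n → ℝ)
    (hp : ∀ t i, p t i = w t i / ∑ j, w t j) :
    ∀ i0 : Fin n,
      ∑ t, ∑ i, p t i * cost t i ≤ (1 + δ) * ∑ t, cost t i0 + Real.log n / δ := by
  intro i0
  -- Extending the costs by `0` beyond round `T` indexes the rounds by `ℕ`.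
  set c : ℕ → Fin n → ℝ := fun s i => if h : s < T then cost ⟨s, h⟩ i else 0
  have hc : ∀ s i, c s i ∈ Set.Icc 0 1 := fun s i => by
    by_cases h : s < T <;> simp [c, h, hcost]
  have hcost_eq : ∀ t i, cost t i = c t i := by simp [c]
  have hw_eq : ∀ t i, w t i = weight δ c t i := fun t i => by
    simp only [hw, hcost_eq, weight, Fin.prod_filter_lt_eq_prod_range t (fun s => 1 - δ * c s i)]
  have hp_eq : ∀ t i, p t i = play δ c t i := by simp [hp, hw_eq, play, potential]
  have hsum := sum_expectedCost_le hδ0 hδ hc T i0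
  simp only [Fintype.card_fin] at hsum
  simp only [hp_eq, hcost_eq]
  rwa [Fin.sum_univ_eq_sum_range (fun s => ∑ i, play δ c s i * c s i),
    Fin.sum_univ_eq_sum_range (fun s => c s i0)]

/-- Multiplicative Weights regret bound. With costs `m_t(i) ∈ [0,1]`,
`0 < δ ≤ 1/2`, weights `w_{t+1}(i) = w_t(i)(1 − δ m_t(i))` started uniformly, and plays
`p_t(i) = w_t(i)/Σ_j w_t(j)`, we have
`Σ_t ⟨m_t, p_t⟩ ≤ (1+δ) min_i Σ_t m_t(i) + (ln n)/δ`. -/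
theorem stmt5 (n T : ℕ) (hn : 0 < n) (δ : ℝ) (hδ0 : 0 < δ) (hδ : δ ≤ 1 / 2)
    (cost : Fin T → Fin n → ℝ) (hcost : ∀ t i, cost t i ∈ Set.Icc (0:ℝ) 1)
    (w : Fin T → Fin n → ℝ)
    (hw : ∀ t i, w t i = ∏ s ∈ Finset.univ.filter (fun s => s < t), (1 - δ * cost s i))
    (p : Fin T → Fin n → ℝ)
    (hp : ∀ t i, p t i = w t i / ∑ j, w t j) :
    ∀ i0 : Fin n,
      ∑ t, ∑ i, p t i * cost t i ≤ (1 + δ) * ∑ t, cost t i0 + Real.log n / δ :=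
  stmt5_general n T δ hδ0 hδ cost hcost w hw p hp
end
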